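/- Let φ : ℝ² → E be a C² two-parameter family of points of E, and let T, Y_1, …, Y_p : ℝ → ℝ be differentiable functions such that for every λ₁ ∈ ℝ, the point φ(λ₁, 0) satisfies the first law with temperature T(λ₁) and potentials Y_1(λ₁), …, Y_p(λ₁). Then for every λ₁, evaluating at the point φ(λ₁, 0): B_{φ(λ₁,0)}(∂φ/∂λ₁, ∂φ/∂λ₂) = T′(λ₁)·DS_{φ(λ₁,0)}(∂φ/∂λ₂) + Σ_{i=1}^p Y_i′(λ₁)·DX^i_{φ(λ₁,0)}(∂φ/∂λ₂), where the partial derivatives of φ are evaluated at (λ₁, 0). -/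

import Mathlib

open Filter Topology

/-- The second Fréchet derivative of `f : E → ℝ` at `φ`, applied to `u`, `v`. -/
noncomputable def D2 {E : Type*} [NormedAddCommGroup E] [NormedSpace ℝ E]
    (f : E → ℝ) (φ u v : E) : ℝ :=
  fderiv ℝ (fderiv ℝ f) φ u v

/-- `φ` satisfies the first law with temperature `T` and potentials `Y i`:
`DM_φ = T·DS_φ + ∑ i, Y i · DX^i_φ` as continuous linear functionals. -/
def FirstLaw {E : Type*} [NormedAddCommGroup E] [NormedSpace ℝ E] {p : ℕ}
    (M S : E → ℝ) (X : Fin p → E → ℝ) (φ : E) (T : ℝ) (Y : Fin p → ℝ) : Prop :=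
  fderiv ℝ M φ = T • fderiv ℝ S φ + ∑ i, Y i • fderiv ℝ (X i) φ

/-- The canonical bilinear form
`B_φ(u,v) = D²M_φ(u,v) − T·D²S_φ(u,v) − ∑ i, Y i·D²X^i_φ(u,v)`. -/
noncomputable def Bform {E : Type*} [NormedAddCommGroup E] [NormedSpace ℝ E] {p : ℕ}
    (M S : E → ℝ) (X : Fin p → E → ℝ) (φ : E) (T : ℝ) (Y : Fin p → ℝ) (u v : E) : ℝ :=
  D2 M φ u v - T * D2 S φ u v - ∑ i, Y i * D2 (X i) φ u v

/-! Differentiate the first law `DM = T·DS + ∑ Yᵢ·DXᵢ` along the curve `t ↦ φ(t, 0)`: the product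
rule gives `D²M(u) = T·D²S(u) + T′·DS + ∑ (Yᵢ·D²Xᵢ(u) + Yᵢ′·DXᵢ)` with `u = ∂₁φ`, and evaluating
this identity of functionals at `v = ∂₂φ` is the claim. -/

section FirstLawAlongCurve

variable {E : Type*} [NormedAddCommGroup E] [NormedSpace ℝ E]

theorem ContDiff.differentiable_fderiv_of_top {F : Type*} [NormedAddCommGroup F]
    [NormedSpace ℝ F] {f : E → F} (hf : ContDiff ℝ (⊤ : ℕ∞) f) :
    Differentiable ℝ (fderiv ℝ f) :=
  (hf.fderiv_right (m := 1) (by norm_cast)).differentiable one_ne_zero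

theorem hasDerivAt_fderiv_comp {F : Type*} [NormedAddCommGroup F] [NormedSpace ℝ F]
    {f : E → F} {γ : ℝ → E} {u : E} {a : ℝ}
    (hf : DifferentiableAt ℝ (fderiv ℝ f) (γ a)) (hγ : HasDerivAt γ u a) :
    HasDerivAt (fun t => fderiv ℝ f (γ t)) (fderiv ℝ (fderiv ℝ f) (γ a) u) a :=
  hf.hasFDerivAt.comp_hasDerivAt a hγ

theorem hasDerivAt_smul_fderiv_comp {F : Type*} [NormedAddCommGroup F] [NormedSpace ℝ F]
    {f : E → F} {c : ℝ → ℝ} {γ : ℝ → E} {u : E} {a : ℝ}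
    (hf : DifferentiableAt ℝ (fderiv ℝ f) (γ a)) (hc : DifferentiableAt ℝ c a)
    (hγ : HasDerivAt γ u a) :
    HasDerivAt (fun t => c t • fderiv ℝ f (γ t))
      (c a • fderiv ℝ (fderiv ℝ f) (γ a) u + deriv c a • fderiv ℝ f (γ a)) a := by
  have hfγ := hasDerivAt_fderiv_comp hf hγ
  exact hc.hasDerivAt.smul hfγ

variable {p : ℕ} {M S : E → ℝ} {X : Fin p → E → ℝ} {γ : ℝ → E} {T : ℝ → ℝ}
  {Y : Fin p → ℝ → ℝ} {a : ℝ} {u : E}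

theorem hasDerivAt_firstLaw_rhs
    (hS : DifferentiableAt ℝ (fderiv ℝ S) (γ a))
    (hX : ∀ i, DifferentiableAt ℝ (fderiv ℝ (X i)) (γ a))
    (hT : DifferentiableAt ℝ T a) (hY : ∀ i, DifferentiableAt ℝ (Y i) a)
    (hγ : HasDerivAt γ u a) :
    HasDerivAt (fun t => T t • fderiv ℝ S (γ t) + ∑ i, Y i t • fderiv ℝ (X i) (γ t))
      ((T a • fderiv ℝ (fderiv ℝ S) (γ a) u + deriv T a • fderiv ℝ S (γ a)) +
        ∑ i, (Y i a • fderiv ℝ (fderiv ℝ (X i)) (γ a) u +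
          deriv (Y i) a • fderiv ℝ (X i) (γ a))) a :=
  (hasDerivAt_smul_fderiv_comp hS hT hγ).add <|
    HasDerivAt.fun_sum fun i _ => hasDerivAt_smul_fderiv_comp (hX i) (hY i) hγ

theorem Bform_eq_of_firstLaw_along_curve
    (hM : DifferentiableAt ℝ (fderiv ℝ M) (γ a))
    (hS : DifferentiableAt ℝ (fderiv ℝ S) (γ a))
    (hX : ∀ i, DifferentiableAt ℝ (fderiv ℝ (X i)) (γ a))
    (hT : DifferentiableAt ℝ T a) (hY : ∀ i, DifferentiableAt ℝ (Y i) a)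
    (hγ : HasDerivAt γ u a)
    (hfl : ∀ᶠ t in 𝓝 a, FirstLaw M S X (γ t) (T t) (fun i => Y i t)) (v : E) :
    Bform M S X (γ a) (T a) (fun i => Y i a) u v =
      deriv T a * fderiv ℝ S (γ a) v + ∑ i, deriv (Y i) a * fderiv ℝ (X i) (γ a) v := by
  have hderiv := (hasDerivAt_fderiv_comp hM hγ).unique <|
    (hasDerivAt_firstLaw_rhs hS hX hT hY hγ).congr_of_eventuallyEq hfl
  have happ := congrArg (fun L : E →L[ℝ] ℝ => L v) hderiv
  simp only [add_apply, smul_apply, sum_apply, smul_eq_mul, Finset.sum_add_distrib] at happ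
  simp only [Bform, D2, happ]
  ring

end FirstLawAlongCurve

theorem hasDerivAt_comp_prodMk_const {F : Type*} [NormedAddCommGroup F] [NormedSpace ℝ F]
    {φ : ℝ × ℝ → F} {a b : ℝ} (hφ : DifferentiableAt ℝ φ (a, b)) :
    HasDerivAt (fun t => φ (t, b)) (fderiv ℝ φ (a, b) (1, 0)) a :=
  hφ.hasFDerivAt.comp_hasDerivAt a ((hasDerivAt_id a).prodMk (hasDerivAt_const a b))

theorem turning_point_lemma
    {E : Type*} [NormedAddCommGroup E] [NormedSpace ℝ E]
    {p : ℕ} (M S : E → ℝ) (X : Fin p → E → ℝ)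
    (hM : ContDiff ℝ (⊤ : ℕ∞) M) (hS : ContDiff ℝ (⊤ : ℕ∞) S)
    (hX : ∀ i, ContDiff ℝ (⊤ : ℕ∞) (X i))
    (φ : ℝ × ℝ → E) (hφ : ContDiff ℝ 2 φ)
    (T : ℝ → ℝ) (Y : Fin p → ℝ → ℝ)
    (hT : Differentiable ℝ T) (hY : ∀ i, Differentiable ℝ (Y i))
    (hfl : ∀ l₁ : ℝ, FirstLaw M S X (φ (l₁, 0)) (T l₁) (fun i => Y i l₁)) :
    ∀ l₁ : ℝ,
      Bform M S X (φ (l₁, 0)) (T l₁) (fun i => Y i l₁)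
        (fderiv ℝ φ (l₁, 0) (1, 0)) (fderiv ℝ φ (l₁, 0) (0, 1)) =
      deriv T l₁ * fderiv ℝ S (φ (l₁, 0)) (fderiv ℝ φ (l₁, 0) (0, 1)) +
      ∑ i, deriv (Y i) l₁ * fderiv ℝ (X i) (φ (l₁, 0)) (fderiv ℝ φ (l₁, 0) (0, 1)) := fun a =>
  Bform_eq_of_firstLaw_along_curve (γ := fun t => φ (t, 0))
    (hM.differentiable_fderiv_of_top _) (hS.differentiable_fderiv_of_top _)
    (fun i => (hX i).differentiable_fderiv_of_top _) (hT a) (fun i => hY i a)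
    (hasDerivAt_comp_prodMk_const (hφ.differentiable two_ne_zero _))
    (Eventually.of_forall hfl) _
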